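/- Let (d_1, ..., d_n) be a non-decreasing sequence of non-negative real numbers satisfying condition I (for every subset J of {1,...,n}, Σ_{i∈J} d_i ≥ binom(|J|,2), with equality when J = {1,...,n}) and condition II (d_i + d_{n+1-i} = n - 1 for all i). Then there exist, for each m ≥ 1, non-decreasing sequences (d_1^{(m)}, ..., d_n^{(m)}) of non-negative rational numbers satisfying conditions I and II such that d_i^{(m)} → d_i as m → ∞ for each i = 1, 2, ..., n. -/

import Mathlib

/-- Condition I: every subset `J` of the indices has score sum at least `binom |J| 2`,
with equality for the full set. -/
def CondI {n : ℕ} (d : Fin n → ℝ) : Prop :=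
  (∀ J : Finset (Fin n), (J.card.choose 2 : ℝ) ≤ ∑ i ∈ J, d i) ∧
  ∑ i, d i = (n.choose 2 : ℝ)

/-- Condition II: `d i + d (n+1-i) = n - 1` for all `i`. -/
def CondII {n : ℕ} (d : Fin n → ℝ) : Prop :=
  ∀ i : Fin n, d i + d i.rev = (n : ℝ) - 1

/-!
The conditions are linear with rational coefficients. Round `d` down to `q` on a grid of mesh
`1 / N`, restore condition II by the symmetrization `e i = (q i + (n - 1) - q (rev i)) / 2`,
which keeps monotonicity and stays within `1 / N` of `d`, and then pull `e` towards the
constant sequence `(n - 1) / 2` with weight `t`. The constant sequence satisfies every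
inequality of condition I for a proper subset `J` with slack `t |J| (n - |J|) / 2 ≥ t |J| / 2`,
which absorbs the rounding error `|J| / N` once `1 / N ≤ t / 2`.
-/

open Filter Finset Topology

section Construction

variable {K : Type*} [Field K] {n : ℕ}

def revSymm (q : Fin n → K) (i : Fin n) : K := (q i + (n - 1) - q i.rev) / 2

def towardCenter (t : K) (e : Fin n → K) (i : Fin n) : K := (1 - t) * e i + t * ((n - 1) / 2)

theorem Monotone.revSymm [LinearOrder K] [IsStrictOrderedRing K] {q : Fin n → K}
    (hq : Monotone q) : Monotone (revSymm q) := fun i j hij => by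
  unfold _root_.revSymm
  linarith [hq hij, hq (Fin.rev_le_rev.mpr hij)]

theorem Monotone.towardCenter [LinearOrder K] [IsStrictOrderedRing K] {t : K} {e : Fin n → K}
    (ht : t ≤ 1) (he : Monotone e) : Monotone (towardCenter t e) := fun i j hij => by
  unfold _root_.towardCenter
  have : 0 ≤ 1 - t := sub_nonneg.mpr ht
  gcongr
  exact he hij

@[simp, norm_cast]
theorem Rat.cast_revSymm (q : Fin n → ℚ) (i : Fin n) :
    ((revSymm q i : ℚ) : ℝ) = revSymm (fun j => (q j : ℝ)) i := by
  simp [revSymm]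

@[simp, norm_cast]
theorem Rat.cast_towardCenter (t : ℚ) (e : Fin n → ℚ) (i : Fin n) :
    ((towardCenter t e i : ℚ) : ℝ) = towardCenter (t : ℝ) (fun j => (e j : ℝ)) i := by
  simp [towardCenter]

end Construction

section Conditions

variable {n : ℕ}

theorem CondI.nonneg {d : Fin n → ℝ} (hd : CondI d) (i : Fin n) : 0 ≤ d i := by
  simpa using hd.1 {i}

theorem CondII.sum_eq_choose_two {d : Fin n → ℝ} (hd : CondII d) :
    ∑ i, d i = (n.choose 2 : ℝ) := by
  have h : 2 * ∑ i, d i = n * ((n : ℝ) - 1) := by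
    calc 2 * ∑ i, d i = ∑ i, (d i + d i.rev) := by
          rw [sum_add_distrib, Fintype.sum_equiv Fin.revPerm (fun i => d i.rev) d fun _ => rfl]
          ring
      _ = n * ((n : ℝ) - 1) := by simp [hd _]; ring
  rw [Nat.cast_choose_two]
  linarith

theorem CondII.condI_of_forall_card_lt {d : Fin n → ℝ} (hd : CondII d)
    (h : ∀ J : Finset (Fin n), J.card < n → (J.card.choose 2 : ℝ) ≤ ∑ i ∈ J, d i) :
    CondI d := by
  refine ⟨fun J => ?_, hd.sum_eq_choose_two⟩
  rcases J.card_le_univ.lt_or_eq with hJ | hJ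
  · exact h J (by simpa using hJ)
  · rw [eq_univ_of_card J hJ, hd.sum_eq_choose_two]
    simp

theorem condII_revSymm (q : Fin n → ℝ) : CondII (revSymm q) := fun i => by
  simp only [revSymm, Fin.rev_rev]
  ring

theorem CondII.towardCenter {e : Fin n → ℝ} (he : CondII e) (t : ℝ) :
    CondII (towardCenter t e) := fun i => by
  simp only [_root_.towardCenter]
  linear_combination (1 - t) * he i

theorem CondII.abs_revSymm_sub_le {d q : Fin n → ℝ} (hd : CondII d) {δ : ℝ}
    (hq : ∀ i, |q i - d i| ≤ δ) (i : Fin n) : |revSymm q i - d i| ≤ δ := by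
  have hsymm : revSymm q i - d i = ((q i - d i) - (q i.rev - d i.rev)) / 2 := by
    simp only [revSymm]
    linear_combination (-1 / 2 : ℝ) * hd i
  rw [hsymm, abs_div, abs_two]
  linarith [abs_sub (q i - d i) (q i.rev - d i.rev), hq i, hq i.rev]

theorem CondI.towardCenter {d e : Fin n → ℝ} (hd : CondI d) (he : CondII e) {t δ : ℝ}
    (ht : t ≤ 1) (hδ : 0 ≤ δ) (hδt : δ ≤ t / 2) (hde : ∀ i, d i - δ ≤ e i) :
    CondI (towardCenter t e) := by
  refine (he.towardCenter t).condI_of_forall_card_lt fun J hJ => ?_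
  have hsum : ∑ i ∈ J, _root_.towardCenter t e i
      = (1 - t) * ∑ i ∈ J, e i + t * (J.card * ((n - 1) / 2)) := by
    simp [_root_.towardCenter, sum_add_distrib, mul_sum]
    ring
  have he_sum : (J.card.choose 2 : ℝ) - J.card * δ ≤ ∑ i ∈ J, e i := by
    have := sum_le_sum fun i (_ : i ∈ J) => hde i
    rw [sum_sub_distrib, sum_const, nsmul_eq_mul] at this
    linarith [hd.1 J]
  have hk0 := J.card.cast_nonneg (α := ℝ)
  have hkn : (J.card : ℝ) + 1 ≤ n := by exact_mod_cast hJ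
  rw [hsum]
  rw [Nat.cast_choose_two] at he_sum ⊢
  linarith [mul_le_mul_of_nonneg_left he_sum (sub_nonneg.mpr ht),
    mul_nonneg hk0 (by linarith : 0 ≤ t / 2 - δ),
    mul_nonneg (mul_nonneg hk0 hδ) (by linarith : (0 : ℝ) ≤ t),
    mul_nonneg (mul_nonneg hk0 (by linarith : (0 : ℝ) ≤ t))
      (by linarith : (0 : ℝ) ≤ n - J.card - 1)]

end Conditions

theorem tendsto_towardCenter {ι : Type*} {l : Filter ι} {n : ℕ} {t : ι → ℝ}
    {e : ι → Fin n → ℝ} {i : Fin n} {x : ℝ} (ht : Tendsto t l (𝓝 0))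
    (he : Tendsto (fun m => e m i) l (𝓝 x)) :
    Tendsto (fun m => towardCenter (t m) (e m) i) l (𝓝 x) := by
  simpa [towardCenter] using
    ((tendsto_const_nhds (x := (1 : ℝ)).sub ht).mul he).add
      (ht.mul (tendsto_const_nhds (x := ((n : ℝ) - 1) / 2)))

noncomputable def floorApprox (N : ℕ) (x : ℝ) : ℚ := ⌊N * x⌋ / N

theorem monotone_floorApprox (N : ℕ) : Monotone (floorApprox N) := fun x y hxy => by
  unfold floorApprox
  gcongr

theorem abs_floorApprox_sub_le {N : ℕ} (hN : 0 < N) (x : ℝ) :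
    |(floorApprox N x : ℝ) - x| ≤ 1 / N := by
  have hN' : (0 : ℝ) < N := by exact_mod_cast hN
  have hsub : (floorApprox N x : ℝ) - x = (⌊N * x⌋ - N * x) / N := by
    simp only [floorApprox, Rat.cast_div, Rat.cast_intCast, Rat.cast_natCast]
    field_simp
  rw [hsub, abs_div, abs_of_pos hN', div_le_div_iff_of_pos_right hN', abs_le]
  constructor <;> linarith [Int.floor_le ((N : ℝ) * x), Int.lt_floor_add_one ((N : ℝ) * x)]

noncomputable def approxSeq {n : ℕ} (d : Fin n → ℝ) (m : ℕ) : Fin n → ℚ :=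
  towardCenter (1 / (m + 1)) (revSymm fun i => floorApprox (2 * (m + 1)) (d i))

theorem rational_approximation_condI_condII_general (n : ℕ) (d : Fin n → ℝ)
    (hmono : Monotone d) (hI : CondI d) (hII : CondII d) :
    ∃ D : ℕ → Fin n → ℚ,
      (∀ m, Monotone (D m)) ∧ (∀ m i, 0 ≤ D m i) ∧
      (∀ m, CondI (fun i => (D m i : ℝ))) ∧
      (∀ m, CondII (fun i => (D m i : ℝ))) ∧
      (∀ i, Filter.Tendsto (fun m => (D m i : ℝ)) Filter.atTop (nhds (d i))) := by
  set e : ℕ → Fin n → ℝ := fun m => revSymm fun i => (floorApprox (2 * (m + 1)) (d i) : ℝ)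
  have hcast (m : ℕ) :
      (fun i => (approxSeq d m i : ℝ)) = towardCenter (1 / ((m : ℝ) + 1)) (e m) := by
    ext i
    simp [approxSeq, e]
  have he (m : ℕ) (i : Fin n) : |e m i - d i| ≤ 1 / (m + 1) / 2 := by
    have := hII.abs_revSymm_sub_le (fun i => abs_floorApprox_sub_le (N := 2 * (m + 1))
      (by positivity) (d i)) i
    exact this.trans_eq (by push_cast; rw [div_div, mul_comm])
  have hDI (m : ℕ) : CondI fun i => (approxSeq d m i : ℝ) := by
    rw [hcast]
    exact hI.towardCenter (condII_revSymm _) (div_le_one_of_le₀ (by simp) (by positivity))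
      (by positivity) le_rfl fun i => by linarith [(abs_le.mp (he m i)).1]
  refine ⟨approxSeq d, fun m => ?_, fun m i => by exact_mod_cast (hDI m).nonneg i, hDI,
    fun m => hcast m ▸ (condII_revSymm _).towardCenter _, fun i => ?_⟩
  · exact ((monotone_floorApprox _).comp hmono).revSymm.towardCenter
      (div_le_one_of_le₀ (by simp) (by positivity))
  · refine (tendsto_towardCenter tendsto_one_div_add_atTop_nhds_zero_nat ?_).congr
      fun m => (congrFun (hcast m) i).symm
    refine tendsto_iff_norm_sub_tendsto_zero.mpr
      (squeeze_zero (fun _ => norm_nonneg _) (fun m => he m i) ?_)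
    simpa using (tendsto_one_div_add_atTop_nhds_zero_nat (𝕜 := ℝ)).div_const 2

/-- Any non-decreasing non-negative real sequence satisfying conditions I and II can be
approximated by non-decreasing non-negative rational sequences satisfying conditions
I and II. -/
theorem rational_approximation_condI_condII (n : ℕ) (d : Fin n → ℝ)
    (hmono : Monotone d) (hpos : ∀ i, 0 ≤ d i) (hI : CondI d) (hII : CondII d) :
    ∃ D : ℕ → Fin n → ℚ,
      (∀ m, Monotone (D m)) ∧ (∀ m i, 0 ≤ D m i) ∧
      (∀ m, CondI (fun i => (D m i : ℝ))) ∧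
      (∀ m, CondII (fun i => (D m i : ℝ))) ∧
      (∀ i, Filter.Tendsto (fun m => (D m i : ℝ)) Filter.atTop (nhds (d i))) :=
  rational_approximation_condI_condII_general n d hmono hI hII
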